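/- Theorem 2 (upper bound): Under assumption (i) (joint independence of the instrument from all potential outcomes), for all i, j ∈ {0,1}: P(Y(x_i) = j) ≤ g(i, j). -/

import Mathlib

open MeasureTheory ProbabilityTheory

/-- The bound `g(i, j)` of Theorem 2, expressed in terms of the observed conditional laws
`p z x y = P(X = x, Y = y | Z = z)`:
`g(i,j) = min{ min_z [ p_z(X=i,Y=j) + p_z(X=1−i) ],`
`min_{z ≠ z̃} [ p_z(X=i,Y=j) + p_z(X=1−i,Y=0) + p_{z̃}(X=i,Y=j) + p_{z̃}(X=1−i,Y=1) ] }`,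
where `p_z(X = 1−i) = p_z(X=1−i, Y=0) + p_z(X=1−i, Y=1)`. -/
noncomputable def gOf {K : ℕ} (hK : 2 ≤ K) (p : Fin K → Fin 2 → Fin 2 → ℝ)
    (i j : Fin 2) : ℝ :=
  min
    ((Finset.univ : Finset (Fin K)).inf'
      ⟨⟨0, by omega⟩, Finset.mem_univ _⟩
      (fun z => p z i j + (p z (1 - i) 0 + p z (1 - i) 1)))
    (((Finset.univ : Finset (Fin K × Fin K)).filter (fun q => q.1 ≠ q.2)).inf'
      ⟨(⟨0, by omega⟩, ⟨1, by omega⟩), by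
        simp only [Finset.mem_filter, Finset.mem_univ, true_and]
        exact fun h => absurd (congrArg Fin.val h) (by simp)⟩
      (fun q => p q.1 i j + p q.1 (1 - i) 0 + p q.2 i j + p q.2 (1 - i) 1))

/-!
Write `Y(x)` for the vector of potential outcomes. Since the instrument is independent of `Y(x)`,
conditioning on `Z = z` does not change the probability of any event determined by `Y(x)`. By
consistency, `Y(xᵢ) = j` forces `(X, Y) = (i, j)` or `X = 1 - i`, which gives the first family
of bounds. For the second, split `Y(xᵢ) = j` according to the value `k` of `Y(x_{1-i})`: the
event `Y(xᵢ) = j ∧ Y(x_{1-i}) = k` forces `(X, Y) = (i, j)` or `(X, Y) = (1 - i, k)`, and the two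
pieces may be conditioned on different values of the instrument.
-/

theorem ProbabilityTheory.IndepFun.measure_preimage_le_cond {Ω α β : Type*}
    {mΩ : MeasurableSpace Ω} [MeasurableSpace α] [MeasurableSpace β] {μ : Measure Ω}
    [IsFiniteMeasure μ] {f : Ω → α} {g : Ω → β} (hfg : IndepFun f g μ) {s : Set α}
    {t : Set β} (hs : MeasurableSet s) (ht : MeasurableSet t) (hfs : μ (f ⁻¹' s) ≠ 0) :
    μ (g ⁻¹' t) ≤ μ[|f ⁻¹' s] (g ⁻¹' t) :=
  calc μ (g ⁻¹' t) = (μ (f ⁻¹' s))⁻¹ * (μ (f ⁻¹' s) * μ (g ⁻¹' t)) := by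
        rw [← mul_assoc, ENNReal.inv_mul_cancel hfs (measure_ne_top μ _), one_mul]
    _ = (μ (f ⁻¹' s))⁻¹ * μ (g ⁻¹' t ∩ f ⁻¹' s) := by
        rw [Set.inter_comm, hfg.measure_inter_preimage_eq_mul s t hs ht]
    _ ≤ (μ (f ⁻¹' s))⁻¹ * μ.restrict (f ⁻¹' s) (g ⁻¹' t) :=
        mul_le_mul_right (Measure.le_restrict_apply _ _) _
    _ = μ[|f ⁻¹' s] (g ⁻¹' t) := rfl

theorem Fin.two_eq_or_eq_one_sub (a b : Fin 2) : a = b ∨ a = 1 - b := by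
  revert a b
  decide

section PotentialOutcomes

variable {Ω : Type*} {X Y : Ω → Fin 2} {Yx : Ω → Fin 2 → Fin 2}

theorem setOf_potentialOutcome_subset (hY : ∀ ω, Y ω = Yx ω (X ω)) (i j : Fin 2) :
    {ω | Yx ω i = j} ⊆ {ω | X ω = i ∧ Y ω = j} ∪
      ({ω | X ω = 1 - i ∧ Y ω = 0} ∪ {ω | X ω = 1 - i ∧ Y ω = 1}) := by
  intro ω (hω : Yx ω i = j)
  rcases Fin.two_eq_or_eq_one_sub (X ω) i with hX | hX
  · exact Or.inl ⟨hX, by rw [hY, hX, hω]⟩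
  · rcases Fin.two_eq_or_eq_one_sub (Y ω) 0 with hY' | hY'
    · exact Or.inr (Or.inl ⟨hX, hY'⟩)
    · exact Or.inr (Or.inr ⟨hX, hY'⟩)

theorem setOf_potentialOutcomes_subset (hY : ∀ ω, Y ω = Yx ω (X ω)) (i j k : Fin 2) :
    {ω | Yx ω i = j ∧ Yx ω (1 - i) = k} ⊆
      {ω | X ω = i ∧ Y ω = j} ∪ {ω | X ω = 1 - i ∧ Y ω = k} := by
  rintro ω ⟨hj, hk⟩
  rcases Fin.two_eq_or_eq_one_sub (X ω) i with hX | hX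
  · exact Or.inl ⟨hX, by rw [hY, hX, hj]⟩
  · exact Or.inr ⟨hX, by rw [hY, hX, hk]⟩

variable [MeasurableSpace Ω] {μ ν ν' : Measure Ω} [IsFiniteMeasure ν] [IsFiniteMeasure ν']

theorem measureReal_potentialOutcome_le (hY : ∀ ω, Y ω = Yx ω (X ω))
    (hμν : ∀ t, μ (Yx ⁻¹' t) ≤ ν (Yx ⁻¹' t)) (i j : Fin 2) :
    μ.real {ω | Yx ω i = j} ≤ ν.real {ω | X ω = i ∧ Y ω = j} +
      (ν.real {ω | X ω = 1 - i ∧ Y ω = 0} + ν.real {ω | X ω = 1 - i ∧ Y ω = 1}) :=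
  calc μ.real {ω | Yx ω i = j}
      _ ≤ ν.real {ω | Yx ω i = j} :=
        ENNReal.toReal_mono (measure_ne_top ν _) (hμν {y | y i = j})
      _ ≤ _ := (measureReal_mono (setOf_potentialOutcome_subset hY i j)).trans <|
        (measureReal_union_le _ _).trans (add_le_add_right (measureReal_union_le _ _) _)

theorem measureReal_potentialOutcome_le_of_two [IsFiniteMeasure μ]
    (hY : ∀ ω, Y ω = Yx ω (X ω)) (hμν : ∀ t, μ (Yx ⁻¹' t) ≤ ν (Yx ⁻¹' t))
    (hμν' : ∀ t, μ (Yx ⁻¹' t) ≤ ν' (Yx ⁻¹' t)) (i j : Fin 2) :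
    μ.real {ω | Yx ω i = j} ≤ ν.real {ω | X ω = i ∧ Y ω = j} +
      ν.real {ω | X ω = 1 - i ∧ Y ω = 0} + ν'.real {ω | X ω = i ∧ Y ω = j} +
      ν'.real {ω | X ω = 1 - i ∧ Y ω = 1} := by
  have hsplit : {ω | Yx ω i = j} ⊆
      {ω | Yx ω i = j ∧ Yx ω (1 - i) = 0} ∪ {ω | Yx ω i = j ∧ Yx ω (1 - i) = 1} := by
    intro ω (hω : Yx ω i = j)
    rcases Fin.two_eq_or_eq_one_sub (Yx ω (1 - i)) 0 with h | h
    · exact Or.inl ⟨hω, h⟩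
    · exact Or.inr ⟨hω, h⟩
  have h₀ : μ.real {ω | Yx ω i = j ∧ Yx ω (1 - i) = 0} ≤
      ν.real {ω | X ω = i ∧ Y ω = j} + ν.real {ω | X ω = 1 - i ∧ Y ω = 0} :=
    (ENNReal.toReal_mono (measure_ne_top ν _) (hμν {y | y i = j ∧ y (1 - i) = 0})).trans <|
      (measureReal_mono (setOf_potentialOutcomes_subset hY i j 0)).trans
        (measureReal_union_le _ _)
  have h₁ : μ.real {ω | Yx ω i = j ∧ Yx ω (1 - i) = 1} ≤
      ν'.real {ω | X ω = i ∧ Y ω = j} + ν'.real {ω | X ω = 1 - i ∧ Y ω = 1} :=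
    (ENNReal.toReal_mono (measure_ne_top ν' _) (hμν' {y | y i = j ∧ y (1 - i) = 1})).trans <|
      (measureReal_mono (setOf_potentialOutcomes_subset hY i j 1)).trans
        (measureReal_union_le _ _)
  linarith [(measureReal_mono (μ := μ) hsplit).trans (measureReal_union_le _ _)]

end PotentialOutcomes

theorem stmt7
    {Ω : Type*} [MeasurableSpace Ω] (P : Measure Ω) [IsProbabilityMeasure P]
    (K : ℕ) (hK : 2 ≤ K)
    (Z : Ω → Fin K) (Xz : Fin K → Ω → Fin 2) (Y0 Y1 : Ω → Fin 2)
    (X : Ω → Fin 2)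
    (Y : Ω → Fin 2) (hY : ∀ ω, Y ω = if X ω = 0 then Y0 ω else Y1 ω)
    (hpos : ∀ z, 0 < P (Z ⁻¹' {z}))
    (hindep : IndepFun Z (fun ω => (Y0 ω, Y1 ω, fun z => Xz z ω)) P) :
    ∀ i j : Fin 2,
      (P {ω | (if i = 0 then Y0 ω else Y1 ω) = j}).toReal ≤
        gOf hK (fun z x y => (P[|Z ⁻¹' {z}] {ω | X ω = x ∧ Y ω = y}).toReal) i j := by
  intro i j
  let Yx : Ω → Fin 2 → Fin 2 := fun ω x => if x = 0 then Y0 ω else Y1 ω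
  have hYx : Measurable fun (q : Fin 2 × Fin 2 × (Fin K → Fin 2)) (x : Fin 2) =>
      if x = 0 then q.1 else q.2.1 := .of_discrete
  have hindepYx : IndepFun Z Yx P := hindep.comp measurable_id hYx
  have hcond : ∀ z, IsProbabilityMeasure P[|Z ⁻¹' {z}] :=
    fun z => cond_isProbabilityMeasure (hpos z).ne'
  have hle : ∀ z t, P (Yx ⁻¹' t) ≤ P[|Z ⁻¹' {z}] (Yx ⁻¹' t) := fun z _ =>
    hindepYx.measure_preimage_le_cond (measurableSet_singleton z) (.of_discrete) (hpos z).ne'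
  rw [gOf]
  refine le_min (Finset.le_inf' _ _ fun z _ => ?_) (Finset.le_inf' _ _ fun q _ => ?_)
  · exact measureReal_potentialOutcome_le (Yx := Yx) hY (hle z) i j
  · exact measureReal_potentialOutcome_le_of_two (Yx := Yx) hY (hle q.1) (hle q.2) i j
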